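/- Let r_i, r_j be the reward distributions of two arms (probability measures on a finite set of reals), and let π(i), π(j) denote the probabilities that arm i (resp. j) has the strictly highest realized reward among k independent arms, with ties between the top arms broken uniformly at random in the two-way case. Then |π(i) − π(j)| ≤ 2·TV(r_i, r_j). -/
import Mathlib


open scoped Classical

/-- Total variation distance between two distributions on a finite set. -/
noncomputable def tv {X : Type*} [Fintype X] (μ ν : X → ℝ) : ℝ :=
  (∑ x, |μ x - ν x|) / 2

/-- Selection weight for arm `a` given realizations `v`: 1 if `a` is the strict maximum,
1/2 in case of a two-way tie at the top involving `a`, and 0 otherwise. -/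
noncomputable def weight {V : Type*} [LinearOrder V] {k : ℕ} (a : Fin k) (v : Fin k → V) : ℝ :=
  if ∀ b, b ≠ a → v b < v a then 1
  else if (∀ b, v b ≤ v a) ∧ (Finset.univ.filter (fun b => b ≠ a ∧ v b = v a)).card = 1
    then 1 / 2 else 0

/-- Probability that arm `a` has the highest realized reward among `k` independent arms,
with a two-way tie at the top broken uniformly. -/
noncomputable def bestProb {V : Type*} [Fintype V] [LinearOrder V] {k : ℕ}
    (r : Fin k → V → ℝ) (a : Fin k) : ℝ :=
  ∑ v : Fin k → V, (∏ b, r b (v b)) * weight a v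

lemma weight_nonneg {V : Type*} [LinearOrder V] {k : ℕ} (a : Fin k) (v : Fin k → V) :
    0 ≤ weight a v := by
  unfold weight; split_ifs <;> norm_num

lemma weight_le_one {V : Type*} [LinearOrder V] {k : ℕ} (a : Fin k) (v : Fin k → V) :
    weight a v ≤ 1 := by
  unfold weight; split_ifs <;> norm_num

lemma weight_swap {V : Type*} [LinearOrder V] {k : ℕ} (i j : Fin k) (v : Fin k → V) :
    weight i (v ∘ Equiv.swap i j) = weight j v := by
  have hs : ∀ b, Equiv.swap i j (Equiv.swap i j b) = b := fun b => Equiv.swap_apply_self i j b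
  have hvi : (v ∘ Equiv.swap i j) i = v j := by simp [Equiv.swap_apply_left]
  have h1 : (∀ b, b ≠ i → (v ∘ Equiv.swap i j) b < (v ∘ Equiv.swap i j) i)
      ↔ (∀ b, b ≠ j → v b < v j) := by
    constructor
    · intro h b hb
      have hne : Equiv.swap i j b ≠ i := fun hc => hb (by rw [← hs b, hc, Equiv.swap_apply_left])
      have := h (Equiv.swap i j b) hne
      simpa [Function.comp, hs b, Equiv.swap_apply_left] using this
    · intro h b hb
      have hne : Equiv.swap i j b ≠ j := fun hc => by
        apply hb; rw [← hs b, hc, Equiv.swap_apply_right]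
      have := h (Equiv.swap i j b) hne
      simpa [Function.comp, Equiv.swap_apply_left] using this
  have h2 : (∀ b, (v ∘ Equiv.swap i j) b ≤ (v ∘ Equiv.swap i j) i) ↔ (∀ b, v b ≤ v j) := by
    constructor
    · intro h b
      have := h (Equiv.swap i j b)
      simpa [Function.comp, hs b, Equiv.swap_apply_left] using this
    · intro h b
      simpa [Function.comp, Equiv.swap_apply_left] using h (Equiv.swap i j b)
  have h3 : (Finset.univ.filter
        (fun b => b ≠ i ∧ (v ∘ Equiv.swap i j) b = (v ∘ Equiv.swap i j) i)).card
      = (Finset.univ.filter (fun b => b ≠ j ∧ v b = v j)).card := by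
    apply Finset.card_bij (fun b _ => Equiv.swap i j b)
    · intro a ha
      simp only [Finset.mem_filter, Finset.mem_univ, true_and, Function.comp,
        Equiv.swap_apply_left] at ha ⊢
      refine ⟨fun hc => ha.1 ?_, ha.2⟩
      rw [← hs a, hc, Equiv.swap_apply_right]
    · intro a _ b _ h
      exact (Equiv.swap i j).injective h
    · intro b hb
      simp only [Finset.mem_filter, Finset.mem_univ, true_and] at hb
      refine ⟨Equiv.swap i j b, ?_, hs b⟩
      simp only [Finset.mem_filter, Finset.mem_univ, true_and, Function.comp,
        Equiv.swap_apply_left, hs b]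
      refine ⟨fun hc => hb.1 ?_, hb.2⟩
      rw [← hs b, hc, Equiv.swap_apply_left]
  unfold weight
  exact if_congr h1 rfl (if_congr (and_congr h2 (by rw [h3])) rfl rfl)

lemma prod_split {k : ℕ} {M : Type*} [CommMonoid M] {i j : Fin k} (hij : i ≠ j) (g : Fin k → M) :
    ∏ b, g b = g i * (g j * ∏ b ∈ (Finset.univ.erase i).erase j, g b) := by
  rw [← Finset.mul_prod_erase Finset.univ g (Finset.mem_univ i),
    ← Finset.mul_prod_erase _ g (Finset.mem_erase.mpr ⟨hij.symm, Finset.mem_univ j⟩)]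

/-- The best-arm selection probabilities of two arms differ by at most twice the
total variation distance between their reward distributions. -/
theorem bestProb_smooth {V : Type*} [Fintype V] [LinearOrder V] {k : ℕ}
    (r : Fin k → V → ℝ) (hnn : ∀ a v, 0 ≤ r a v) (hsum : ∀ a, ∑ v, r a v = 1)
    (i j : Fin k) :
    |bestProb r i - bestProb r j| ≤ 2 * tv (r i) (r j) := by
  rcases eq_or_ne i j with rfl | hij
  · have h0 : (0:ℝ) ≤ tv (r i) (r i) := by
      unfold tv; positivity
    simp only [sub_self, abs_zero]
    linarith
  -- setup
  obtain ⟨mn, hmn⟩ : ∃ mn : V → ℝ, ∀ x, mn x = min (r i x) (r j x) := ⟨_, fun _ => rfl⟩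
  set σ : Equiv.Perm (Fin k) := Equiv.swap i j with hσdef
  have hs : ∀ b, σ (σ b) = b := fun b => Equiv.swap_apply_self i j b
  set es : Finset (Fin k) := (Finset.univ.erase i).erase j with hesdef
  set C : (Fin k → V) → ℝ := fun v => ∏ b ∈ es, r b (v b) with hCdef
  have hC : ∀ v, 0 ≤ C v := fun v => Finset.prod_nonneg fun b _ => hnn b (v b)
  have hes_ne : ∀ b ∈ es, b ≠ i ∧ b ≠ j := by
    intro b hb
    simp only [hesdef, Finset.mem_erase, Finset.mem_univ, and_true] at hb
    exact ⟨hb.2, hb.1⟩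
  -- step 1: reindex bestProb r j
  have hbj : bestProb r j = ∑ v : Fin k → V, (∏ b, r (σ b) (v b)) * weight i v := by
    unfold bestProb
    refine Fintype.sum_equiv
      ⟨fun v => v ∘ σ, fun v => v ∘ σ,
        fun v => funext fun b => congrArg v (hs b),
        fun v => funext fun b => congrArg v (hs b)⟩ _ _ (fun v => ?_)
    show (∏ b, r b (v b)) * weight j v = (∏ b, r (σ b) ((v ∘ σ) b)) * weight i (v ∘ σ)
    rw [weight_swap i j v]
    congr 1
    exact (Fintype.prod_equiv σ (fun b => r (σ b) (v (σ b))) (fun c => r c (v c))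
      (fun b => rfl)).symm
  -- product splits
  have hprod1 : ∀ v : Fin k → V, ∏ b, r b (v b) = r i (v i) * (r j (v j) * C v) :=
    fun v => prod_split hij _
  have hprod2 : ∀ v : Fin k → V, ∏ b, r (σ b) (v b) = r j (v i) * (r i (v j) * C v) := by
    intro v
    rw [prod_split hij (fun b => r (σ b) (v b))]
    have h1 : σ i = j := Equiv.swap_apply_left i j
    have h2 : σ j = i := Equiv.swap_apply_right i j
    rw [h1, h2]
    congr 2
    refine Finset.prod_congr rfl fun b hb => ?_
    rw [Equiv.swap_apply_of_ne_of_ne (hes_ne b hb).1 (hes_ne b hb).2]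
  -- the bilinear form
  set T : (V → ℝ) → (V → ℝ) → ℝ := fun α β =>
    ∑ v : Fin k → V, α (v i) * β (v j) * C v * weight i v with hTdef
  have hT_nonneg : ∀ α β : V → ℝ, (∀ x, 0 ≤ α x) → (∀ x, 0 ≤ β x) → 0 ≤ T α β := by
    intro α β hα hβ
    refine Finset.sum_nonneg fun v _ => ?_
    exact mul_nonneg (mul_nonneg (mul_nonneg (hα _) (hβ _)) (hC v)) (weight_nonneg i v)
  have hT_le : ∀ α β : V → ℝ, (∀ x, 0 ≤ α x) → (∀ x, 0 ≤ β x) →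
      T α β ≤ (∑ x, α x) * (∑ x, β x) := by
    intro α β hα hβ
    have step1 : T α β ≤ ∑ v : Fin k → V, α (v i) * β (v j) * C v := by
      refine Finset.sum_le_sum fun v _ => ?_
      have h1 : α (v i) * β (v j) * C v * weight i v ≤ α (v i) * β (v j) * C v * 1 :=
        mul_le_mul_of_nonneg_left (weight_le_one i v)
          (mul_nonneg (mul_nonneg (hα _) (hβ _)) (hC v))
      rw [mul_one] at h1
      exact h1
    have step2 : ∑ v : Fin k → V, α (v i) * β (v j) * C v = (∑ x, α x) * (∑ x, β x) := by
      have key : ∀ v : Fin k → V, α (v i) * β (v j) * C v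
          = ∏ b, (if b = i then α else if b = j then β else r b) (v b) := by
        intro v
        rw [prod_split hij (fun b => (if b = i then α else if b = j then β else r b) (v b))]
        have e1 : (if i = i then α else if i = j then β else r i) = α := if_pos rfl
        have e2 : (if j = i then α else if j = j then β else r j) = β := by
          rw [if_neg hij.symm]; exact if_pos rfl
        rw [e1, e2, mul_assoc]
        congr 2
        refine Finset.prod_congr rfl fun b hb => ?_
        rw [if_neg (hes_ne b hb).1, if_neg (hes_ne b hb).2]
      rw [Finset.sum_congr rfl fun v _ => key v,
        ← Fintype.prod_sum (fun b x => (if b = i then α else if b = j then β else r b) x),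
        prod_split hij (fun b => ∑ x, (if b = i then α else if b = j then β else r b) x)]
      have e1 : (if i = i then α else if i = j then β else r i) = α := if_pos rfl
      have e2 : (if j = i then α else if j = j then β else r j) = β := by
        rw [if_neg hij.symm]; exact if_pos rfl
      rw [e1, e2]
      have : ∏ b ∈ es, (∑ x, (if b = i then α else if b = j then β else r b) x) = 1 := by
        refine Finset.prod_eq_one fun b hb => ?_
        rw [if_neg (hes_ne b hb).1, if_neg (hes_ne b hb).2]
        exact hsum b
      rw [this, mul_one]
    linarith
  -- pointwise decomposition
  have key : bestProb r i - bestProb r j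
      = T (fun x => r i x - mn x) (r j) + T mn (fun x => r j x - mn x)
        - (T mn (fun x => r i x - mn x) + T (fun x => r j x - mn x) (r i)) := by
    rw [hbj]
    unfold bestProb
    rw [← Finset.sum_sub_distrib]
    have hpt : ∀ v : Fin k → V,
        (∏ b, r b (v b)) * weight i v - (∏ b, r (σ b) (v b)) * weight i v
        = (r i (v i) - mn (v i)) * r j (v j) * C v * weight i v
          + mn (v i) * (r j (v j) - mn (v j)) * C v * weight i v
          - ((mn (v i) * (r i (v j) - mn (v j)) * C v * weight i v)
            + (r j (v i) - mn (v i)) * r i (v j) * C v * weight i v) := by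
      intro v
      rw [hprod1 v, hprod2 v]
      ring
    rw [Finset.sum_congr rfl fun v _ => hpt v, Finset.sum_sub_distrib,
      Finset.sum_add_distrib, Finset.sum_add_distrib]
  -- sum facts
  have hmn_le_i : ∀ x, mn x ≤ r i x := fun x => by rw [hmn x]; exact min_le_left _ _
  have hmn_le_j : ∀ x, mn x ≤ r j x := fun x => by rw [hmn x]; exact min_le_right _ _
  have hmn_nn : ∀ x, 0 ≤ mn x := fun x => by rw [hmn x]; exact le_min (hnn i x) (hnn j x)
  have hp_nn : ∀ x, 0 ≤ r i x - mn x := fun x => by linarith [hmn_le_i x]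
  have hq_nn : ∀ x, 0 ≤ r j x - mn x := fun x => by linarith [hmn_le_j x]
  have habs : ∀ x, |r i x - r j x| = (r i x - mn x) + (r j x - mn x) := by
    intro x
    rw [hmn x]
    rcases le_total (r i x) (r j x) with h | h
    · rw [min_eq_left h, abs_of_nonpos (by linarith)]; ring
    · rw [min_eq_right h, abs_of_nonneg (by linarith)]; ring
  have hSp : ∑ x, (r i x - mn x) = 1 - ∑ x, mn x := by
    rw [Finset.sum_sub_distrib, hsum i]
  have hSq : ∑ x, (r j x - mn x) = 1 - ∑ x, mn x := by
    rw [Finset.sum_sub_distrib, hsum j]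
  have htv : tv (r i) (r j) = 1 - ∑ x, mn x := by
    unfold tv
    rw [Finset.sum_congr rfl fun x _ => habs x, Finset.sum_add_distrib, hSp, hSq]
    ring
  have hptv : ∑ x, (r i x - mn x) = tv (r i) (r j) := by rw [hSp, htv]
  have hqtv : ∑ x, (r j x - mn x) = tv (r i) (r j) := by rw [hSq, htv]
  have ht_nn : 0 ≤ tv (r i) (r j) := by
    rw [← hptv]; exact Finset.sum_nonneg fun x _ => hp_nn x
  have hSm_le : ∑ x, mn x ≤ 1 := by
    have h0 : (0:ℝ) ≤ ∑ x, (r i x - mn x) := Finset.sum_nonneg fun x _ => hp_nn x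
    linarith [hSp]
  have hSm_nn : (0:ℝ) ≤ ∑ x, mn x := Finset.sum_nonneg fun x _ => hmn_nn x
  have hA : T (fun x => r i x - mn x) (r j) ≤ tv (r i) (r j) := by
    have h := hT_le _ _ hp_nn (fun x => hnn j x)
    rw [hsum j, mul_one, hptv] at h
    exact h
  have hB : T mn (fun x => r j x - mn x) ≤ tv (r i) (r j) := by
    have h := hT_le _ _ hmn_nn hq_nn
    rw [hqtv] at h
    have h2 : (∑ x, mn x) * tv (r i) (r j) ≤ 1 * tv (r i) (r j) :=
      mul_le_mul_of_nonneg_right hSm_le ht_nn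
    linarith
  have hCb : T mn (fun x => r i x - mn x) ≤ tv (r i) (r j) := by
    have h := hT_le _ _ hmn_nn hp_nn
    rw [hptv] at h
    have h2 : (∑ x, mn x) * tv (r i) (r j) ≤ 1 * tv (r i) (r j) :=
      mul_le_mul_of_nonneg_right hSm_le ht_nn
    linarith
  have hD : T (fun x => r j x - mn x) (r i) ≤ tv (r i) (r j) := by
    have h := hT_le _ _ hq_nn (fun x => hnn i x)
    rw [hsum i, mul_one, hqtv] at h
    exact h
  have hA0 := hT_nonneg _ _ hp_nn (fun x => hnn j x)
  have hB0 := hT_nonneg _ _ hmn_nn hq_nn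
  have hC0 := hT_nonneg _ _ hmn_nn hp_nn
  have hD0 := hT_nonneg _ _ hq_nn (fun x => hnn i x)
  rw [key, abs_le]
  constructor <;> linarith
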